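/- Assume d is not a square in F. Let χ : F^× → ℂ^× be a group homomorphism trivial on o^×, and let Ω : T(F) → ℂ^× be a group homomorphism with conductor exponent C := c(Ω) and with Ω(z·1) = χ(z)² for all z ∈ F^×. Let B : GL₂(F) → ℂ satisfy: (E) B(t·g·k) = Ω(t)·B(g) for all t ∈ T(F), g ∈ GL₂(F), k ∈ I; (N) for every set R ⊆ o of representatives of o/p and every g ∈ GL₂(F), ∑_{u ∈ R} B(g·[[1, 0], [u, 1]]) = −B(g·w); (A) B(g·[[0, 1], [ϖ, 0]]) = −χ(ϖ)·B(g) for all g ∈ GL₂(F). Then for every integer r ≥ max{C − 1, 0}: B(diag(ϖ^{r+1}, 1)·w) = (χ(ϖ)/q)·B(diag(ϖ^r, 1)·w). -/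

import Mathlib

/-!
Apply (N) to `g = diag(ϖ^(r+1), 1)`. The representative of `0` contributes `B g` by Iwahori
invariance, and (A) turns this into `-χ(ϖ) B(diag(ϖ^r, 1) w)`. Each of the `q - 1` unit
representatives `u` contributes `B(g w)`: with `ε = ϖ^(r+1)/(c u)` one has
`g [[1,0],[u,1]] k = t(1, ε) g w` for an explicit `k ∈ I`, and `t(1, ε) ∈ U_C` because
`v ε = r + 1 ≥ C`, so `Ω (t(1, ε)) = 1`. Solving the resulting linear relation gives the claim.
-/

open Matrix

noncomputable section

abbrev Zm0 : Type := WithZero (Multiplicative ℤ)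

/-- `ev n` is the value (in `ℤₘ₀ = WithZero (Multiplicative ℤ)`) of an element of additive
valuation `n`; thus `x ∈ 𝔭^n` iff `v x ≤ ev n`, `x ∈ 𝔬` iff `v x ≤ ev 0`, and `x ∈ 𝔬^×` iff
`v x = ev 0`. -/
def ev (n : ℤ) : Zm0 := ((Multiplicative.ofAdd (-n) : Multiplicative ℤ) : Zm0)

variable {F : Type*} [Field F]

/-- the matrix t(x,y) = [[x, cy],[−ay, x−by]] -/
def tmat (a b c x y : F) : Matrix (Fin 2) (Fin 2) F :=
  !![x, c * y; -(a * y), x - b * y]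

/-- the torus T(F) ⊆ GL₂(F), as a set of matrices -/
def TSet (a b c : F) : Set (Matrix (Fin 2) (Fin 2) F) :=
  {m | ∃ x y : F, x ^ 2 - b * x * y + a * c * y ^ 2 ≠ 0 ∧ m = tmat a b c x y}

def wmat (F : Type*) [Field F] : Matrix (Fin 2) (Fin 2) F := !![0, 1; -1, 0]

/-- GL₂(𝔬) : integral entries and unit determinant -/
def GL2O (v : Valuation F Zm0) : Set (Matrix (Fin 2) (Fin 2) F) :=
  {g | (∀ i j, v (g i j) ≤ ev 0) ∧ v g.det = ev 0}

/-- the Iwahori subgroup I = { g ∈ GL₂(𝔬) : g₂₁ ∈ 𝔭 } -/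
def Iwahori (v : Valuation F Zm0) : Set (Matrix (Fin 2) (Fin 2) F) :=
  {g | g ∈ GL2O v ∧ v (g 1 0) ≤ ev 1}

/-- membership in U_m ⊆ T(F): U_0 = T(F) ∩ GL₂(𝔬), and for m ≥ 1,
U_m = { t ∈ T(F) : t − 1 ∈ ϖ^m·M₂(𝔬) } -/
def Umem (v : Valuation F Zm0) (a b c : F) (m : ℕ) (t : Matrix (Fin 2) (Fin 2) F) : Prop :=
  t ∈ TSet a b c ∧
    (if m = 0 then (∀ i j, v (t i j) ≤ ev 0) ∧ v t.det = ev 0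
     else ∀ i j, v ((t - 1) i j) ≤ ev m)

lemma ev_eq_exp (n : ℤ) : ev n = WithZero.exp (-n) := rfl

@[simp] lemma ev_le_ev {m n : ℤ} : ev m ≤ ev n ↔ n ≤ m := by
  rw [ev_eq_exp, ev_eq_exp, WithZero.exp_le_exp, neg_le_neg_iff]

@[simp] lemma ev_zero : ev 0 = 1 := rfl

@[simp] lemma ev_ne_zero (n : ℤ) : ev n ≠ 0 := WithZero.exp_ne_zero

lemma ev_add (m n : ℤ) : ev (m + n) = ev m * ev n := by
  rw [ev_eq_exp, neg_add, WithZero.exp_add]; rfl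

lemma ev_natCast (n : ℕ) : ev n = ev 1 ^ n := by
  rw [ev_eq_exp, ev_eq_exp, ← WithZero.exp_nsmul]; simp

lemma eq_ev_zero_of_le_of_not_le {x : Zm0} (h0 : x ≤ ev 0) (h1 : ¬ x ≤ ev 1) : x = ev 0 := by
  have hx : x ≠ 0 := by rintro rfl; exact h1 zero_le
  obtain ⟨k, rfl⟩ : ∃ k, x = ev k :=
    ⟨-WithZero.log x, by rw [ev_eq_exp, neg_neg, WithZero.exp_log hx]⟩
  rw [ev_le_ev] at h0 h1
  congr 1; omega

section Valuation

variable {R : Type*} [Ring R] (v : Valuation R Zm0)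

lemma Valuation.ne_zero_of_eq_ev {x : R} {n : ℤ} (h : v x = ev n) : x ≠ 0 := by
  rintro rfl; exact ev_ne_zero n (by simpa using h.symm)

lemma Valuation.map_mul_le_ev {x y : R} {m n : ℤ} (hx : v x ≤ ev m) (hy : v y ≤ ev n) :
    v (x * y) ≤ ev (m + n) := by
  rw [v.map_mul, ev_add]; exact mul_le_mul' hx hy

lemma Valuation.map_one_add_eq_ev_zero {x : R} (hx : v x ≤ ev 1) : v (1 + x) = ev 0 :=
  v.map_one_add_of_lt (hx.trans_lt (lt_of_le_of_ne (ev_le_ev.2 zero_le_one) (by decide)))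

end Valuation

section Torus

variable {v : Valuation F Zm0} {a b c : F}

lemma mem_Iwahori_of_fin_two {x y z w : F} (hx : v x ≤ ev 0) (hy : v y ≤ ev 0)
    (hz : v z ≤ ev 1) (hw : v w ≤ ev 0) (hdet : v (x * w - y * z) = ev 0) :
    !![x, y; z, w] ∈ Iwahori v := by
  have hz0 : v z ≤ ev 0 := hz.trans (ev_le_ev.2 zero_le_one)
  refine ⟨⟨fun i j => ?_, by simpa [det_fin_two_of] using hdet⟩, by simpa using hz⟩
  fin_cases i <;> fin_cases j <;> simpa

lemma tmat_one_zero : tmat a b c 1 0 = 1 := by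
  ext i j; fin_cases i <;> fin_cases j <;> simp [tmat]

lemma det_tmat_one (ε : F) : (tmat a b c 1 ε).det = 1 - b * ε + a * c * ε ^ 2 := by
  rw [tmat, det_fin_two_of]; ring

lemma val_norm_one_eq_ev_zero (hao : v a ≤ ev 0) (hbo : v b ≤ ev 0) (hco : v c ≤ ev 0)
    {ε : F} (hε : v ε ≤ ev 1) : v (1 - b * ε + a * c * ε ^ 2) = ev 0 := by
  rw [show 1 - b * ε + a * c * ε ^ 2 = 1 + (a * c * ε * ε - b * ε) by ring]
  apply v.map_one_add_eq_ev_zero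
  apply v.map_sub_le
  · simpa using v.map_mul_le_ev (v.map_mul_le_ev (v.map_mul_le_ev hao hco)
      (hε.trans (ev_le_ev.2 zero_le_one))) hε
  · simpa using v.map_mul_le_ev hbo hε

lemma tmat_one_mem_TSet {ε : F} (h : v (1 - b * ε + a * c * ε ^ 2) = ev 0) :
    tmat a b c 1 ε ∈ TSet a b c :=
  ⟨1, ε, by simpa using v.ne_zero_of_eq_ev h, rfl⟩

lemma umem_tmat_one (hao : v a ≤ ev 0) (hbo : v b ≤ ev 0) (hco : v c ≤ ev 0) {m : ℕ} {ε : F}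
    (hεm : v ε ≤ ev m) (hε1 : v ε ≤ ev 1) : Umem v a b c m (tmat a b c 1 ε) := by
  have hN := val_norm_one_eq_ev_zero hao hbo hco hε1
  have hcε : v (c * ε) ≤ ev m := by simpa using v.map_mul_le_ev hco hεm
  have haε : v (a * ε) ≤ ev m := by simpa using v.map_mul_le_ev hao hεm
  have hbε : v (b * ε) ≤ ev m := by simpa using v.map_mul_le_ev hbo hεm
  refine ⟨tmat_one_mem_TSet hN, ?_⟩
  split_ifs with hm
  · subst hm
    refine ⟨fun i j => ?_, by rw [det_tmat_one, hN]⟩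
    fin_cases i <;> fin_cases j <;> simp [tmat, -map_mul]
    · exact hcε
    · exact haε
    · exact v.map_sub_le (by simp) hbε
  · intro i j
    fin_cases i <;> fin_cases j <;> simp [tmat, -map_mul]
    · exact hcε
    · exact haε
    · exact hbε

end Torus

lemma diag_mul_lowerUnipotent_mul_eq {a b c u : F} (hu : u ≠ 0) (ε : F) :
    !![c * u * ε, 0; 0, 1] * !![1, 0; u, 1] * !![-u⁻¹, 1; b * ε, -(u + a * c * u * ε ^ 2)] =
      tmat a b c 1 ε * (!![c * u * ε, 0; 0, 1] * wmat F) := by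
  ext i j; fin_cases i <;> fin_cases j <;> simp [tmat, wmat, hu] <;>
    first | ring1 | field_simp

lemma diag_mul_wmat_mul_atkinLehner (ϖ : F) (r : ℕ) :
    !![ϖ ^ r, 0; 0, 1] * wmat F * !![0, 1; ϖ, 0] = !![ϖ ^ (r + 1), 0; 0, 1] * !![1, 0; 0, -1] := by
  ext i j; fin_cases i <;> fin_cases j <;> simp [wmat, pow_succ]

section Equivariant

variable {v : Valuation F Zm0} {a b c : F} {Ω B : Matrix (Fin 2) (Fin 2) F → ℂ}

lemma one_mem_TSet : (1 : Matrix (Fin 2) (Fin 2) F) ∈ TSet a b c :=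
  ⟨1, 0, by simp, tmat_one_zero.symm⟩

lemma one_mem_Iwahori : (1 : Matrix (Fin 2) (Fin 2) F) ∈ Iwahori v := by
  simpa [one_fin_two] using
    (mem_Iwahori_of_fin_two (by simp) (by simp) (by simp) (by simp) (by simp) :
      !![(1 : F), 0; 0, 1] ∈ Iwahori v)

lemma apply_one_eq_one_of_trivial_on_Umem (hao : v a ≤ ev 0) (hbo : v b ≤ ev 0)
    (hco : v c ≤ ev 0) {C : ℕ} (hcond : ∀ t, Umem v a b c C t → Ω t = 1) : Ω 1 = 1 := by
  simpa [tmat_one_zero] using hcond _ (umem_tmat_one hao hbo hco (ε := 0) (by simp) (by simp))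

lemma apply_mul_of_mem_Iwahori
    (hE : ∀ t g k, t ∈ TSet a b c → k ∈ Iwahori v → B (t * g * k) = Ω t * B g) (hΩ1 : Ω 1 = 1)
    (g : Matrix (Fin 2) (Fin 2) F) {k : Matrix (Fin 2) (Fin 2) F} (hk : k ∈ Iwahori v) :
    B (g * k) = B g := by
  simpa [hΩ1] using hE 1 g k one_mem_TSet hk

lemma apply_diag_mul_lowerUnipotent_of_unit (hao : v a ≤ ev 0) (hbo : v b ≤ ev 0)
    (hc : v c = ev 0) {C : ℕ} (hcond : ∀ t, Umem v a b c C t → Ω t = 1)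
    (hE : ∀ t g k, t ∈ TSet a b c → k ∈ Iwahori v → B (t * g * k) = Ω t * B g) (hΩ1 : Ω 1 = 1)
    {P u : F} (hPC : v P ≤ ev C) (hP1 : v P ≤ ev 1) (hu : v u = ev 0) :
    B (!![P, 0; 0, 1] * !![1, 0; u, 1]) = B (!![P, 0; 0, 1] * wmat F) := by
  have hu0 := v.ne_zero_of_eq_ev hu
  have hc0 := v.ne_zero_of_eq_ev hc
  set ε := P / (c * u)
  have hP : P = c * u * ε := by rw [mul_div_cancel₀ _ (mul_ne_zero hc0 hu0)]
  have hvε : v ε = v P := by simp [ε, hc, hu]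
  have hε1 : v ε ≤ ev 1 := hvε ▸ hP1
  have hN := val_norm_one_eq_ev_zero hao hbo hc.le hε1
  have hk : !![-u⁻¹, 1; b * ε, -(u + a * c * u * ε ^ 2)] ∈ Iwahori v := by
    refine mem_Iwahori_of_fin_two (by simp [hu]) (by simp) ?_ ?_ ?_
    · simpa using v.map_mul_le_ev hbo hε1
    · rw [Valuation.map_neg]
      refine v.map_add_le hu.le ?_
      have h := v.map_mul_le_ev (v.map_mul_le_ev
        (v.map_mul_le_ev (v.map_mul_le_ev hao hc.le) hu.le) hε1) hε1
      rw [mul_assoc _ ε ε, ← pow_two] at h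
      exact h.trans (ev_le_ev.2 (by norm_num))
    · rw [← hN]; congr 1; field_simp; ring
  rw [← apply_mul_of_mem_Iwahori hE hΩ1 _ hk, hP, diag_mul_lowerUnipotent_mul_eq hu0,
    ← mul_one (_ * (_ * wmat F)), hE _ _ _ (tmat_one_mem_TSet hN) one_mem_Iwahori,
    hcond _ (umem_tmat_one hao hbo hc.le (hvε ▸ hPC) hε1), one_mul]

lemma apply_diag_pow_succ
    (hE : ∀ t g k, t ∈ TSet a b c → k ∈ Iwahori v → B (t * g * k) = Ω t * B g) (hΩ1 : Ω 1 = 1)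
    {ϖ : F} {μ : ℂ} (hA : ∀ g, B (g * !![0, 1; ϖ, 0]) = μ * B g) (r : ℕ) :
    B !![ϖ ^ (r + 1), 0; 0, 1] = μ * B (!![ϖ ^ r, 0; 0, 1] * wmat F) := by
  rw [← hA, diag_mul_wmat_mul_atkinLehner,
    apply_mul_of_mem_Iwahori hE hΩ1 _ (mem_Iwahori_of_fin_two (by simp) (by simp) (by simp)
      (by simp) (by simp))]

end Equivariant

theorem stmt11_general
    (v : Valuation F Zm0) (ϖ : F) (hϖ : v ϖ = ev 1)
    (a b c : F)
    (hao : v a ≤ ev 0) (hbo : v b ≤ ev 0) (hc : v c = ev 0)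
    -- q is the cardinality of the residue field 𝔬/𝔭 :
    (q : ℕ) (hq : ∃ R : Finset F, R.card = q ∧ (∀ r ∈ R, v r ≤ ev 0) ∧
      ∀ x : F, v x ≤ ev 0 → ∃! r, r ∈ R ∧ v (x - r) ≤ ev 1)
    -- χ : F^× → ℂ^× a homomorphism trivial on 𝔬^× :
    (χ : F → ℂ)
    -- Ω : T(F) → ℂ^× a homomorphism with conductor exponent C and Ω(z·1) = χ(z)² :
    (Ω : Matrix (Fin 2) (Fin 2) F → ℂ)
    (C : ℕ)
    (hcond : ∀ t, Umem v a b c C t → Ω t = 1)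
    (B : Matrix (Fin 2) (Fin 2) F → ℂ)
    -- (E) equivariance :
    (hE : ∀ t g k, t ∈ TSet a b c → k ∈ Iwahori v → B (t * g * k) = Ω t * B g)
    -- (N) summing over any set of representatives of 𝔬/𝔭 :
    (hN : ∀ R : Finset F, (∀ r ∈ R, v r ≤ ev 0) →
      (∀ x : F, v x ≤ ev 0 → ∃! r, r ∈ R ∧ v (x - r) ≤ ev 1) →
      ∀ g, (∑ u ∈ R, B (g * !![1, 0; u, 1])) = - B (g * wmat F))
    -- (A) Atkin–Lehner eigenvector property :
    (hA : ∀ g, B (g * !![0, 1; ϖ, 0]) = -(χ ϖ) * B g) :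
    ∀ r : ℕ, C - 1 ≤ r →
      B (!![ϖ ^ (r + 1), 0; 0, 1] * wmat F) = (χ ϖ / (q : ℂ)) * B (!![ϖ ^ r, 0; 0, 1] * wmat F)
    := by
  classical
  intro r hr
  obtain ⟨R, rfl, hRint, hRrep⟩ := hq
  have hΩ1 : Ω 1 = 1 := apply_one_eq_one_of_trivial_on_Umem hao hbo hc.le hcond
  obtain ⟨u₀, ⟨hu₀R, hu₀⟩, hu₀uniq⟩ := hRrep 0 (by simp)
  have hvP : v (ϖ ^ (r + 1)) = ev (r + 1 : ℕ) := by rw [map_pow, hϖ, ev_natCast]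
  have hunit : ∀ u ∈ R.erase u₀, B (!![ϖ ^ (r + 1), 0; 0, 1] * !![1, 0; u, 1]) =
      B (!![ϖ ^ (r + 1), 0; 0, 1] * wmat F) := by
    intro u hu
    obtain ⟨hne, huR⟩ := Finset.mem_erase.1 hu
    refine apply_diag_mul_lowerUnipotent_of_unit hao hbo hc hcond hE hΩ1
      (hvP ▸ ev_le_ev.2 (by omega)) (hvP ▸ ev_le_ev.2 (by omega))
      (eq_ev_zero_of_le_of_not_le (hRint u huR) fun h => hne (hu₀uniq u ⟨huR, by simpa using h⟩))
  have hu₀I : !![1, 0; u₀, 1] ∈ Iwahori v :=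
    mem_Iwahori_of_fin_two (by simp) (by simp) (by simpa using hu₀) (by simp) (by simp)
  have hsum := hN R hRint hRrep !![ϖ ^ (r + 1), 0; 0, 1]
  rw [← Finset.add_sum_erase R _ hu₀R, Finset.sum_congr rfl hunit, Finset.sum_const,
    Finset.card_erase_of_mem hu₀R, apply_mul_of_mem_Iwahori hE hΩ1 _ hu₀I,
    apply_diag_pow_succ hE hΩ1 hA, nsmul_eq_mul, Nat.cast_sub (Finset.card_pos.2 ⟨u₀, hu₀R⟩),
    Nat.cast_one] at hsum
  have hq : (R.card : ℂ) ≠ 0 := Nat.cast_ne_zero.2 (Finset.card_ne_zero_of_mem hu₀R)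
  rw [div_mul_eq_mul_div, eq_div_iff hq]
  linear_combination hsum

/-- for r ≥ max{c(Ω)−1, 0}, B(diag(ϖ^{r+1},1)·w) = (χ(ϖ)/q)·B(diag(ϖ^r,1)·w). -/
theorem stmt11
    (v : Valuation F Zm0) (ϖ : F) (hϖ : v ϖ = ev 1)
    (a b c : F)
    (hao : v a ≤ ev 0) (hbo : v b ≤ ev 0) (hc : v c = ev 0)
    (hd0 : b ^ 2 - 4 * (a * c) ≠ 0)
    (hnonsq : ∀ s : F, s ^ 2 ≠ b ^ 2 - 4 * (a * c))
    -- q is the cardinality of the residue field 𝔬/𝔭 :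
    (q : ℕ) (hq : ∃ R : Finset F, R.card = q ∧ (∀ r ∈ R, v r ≤ ev 0) ∧
      ∀ x : F, v x ≤ ev 0 → ∃! r, r ∈ R ∧ v (x - r) ≤ ev 1)
    -- χ : F^× → ℂ^× a homomorphism trivial on 𝔬^× :
    (χ : F → ℂ)
    (hχmul : ∀ x y : F, x ≠ 0 → y ≠ 0 → χ (x * y) = χ x * χ y)
    (hχne : ∀ x : F, x ≠ 0 → χ x ≠ 0)
    (hχtriv : ∀ u : F, v u = ev 0 → χ u = 1)
    -- Ω : T(F) → ℂ^× a homomorphism with conductor exponent C and Ω(z·1) = χ(z)² :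
    (Ω : Matrix (Fin 2) (Fin 2) F → ℂ)
    (hΩmul : ∀ s t, s ∈ TSet a b c → t ∈ TSet a b c → Ω (s * t) = Ω s * Ω t)
    (hΩne : ∀ t ∈ TSet a b c, Ω t ≠ 0)
    (C : ℕ)
    (hcond : ∀ t, Umem v a b c C t → Ω t = 1)
    (hleast : ∀ m : ℕ, m < C → ∃ t, Umem v a b c m t ∧ Ω t ≠ 1)
    (hcent : ∀ z : F, z ≠ 0 → Ω (z • (1 : Matrix (Fin 2) (Fin 2) F)) = (χ z) ^ 2)
    (B : Matrix (Fin 2) (Fin 2) F → ℂ)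
    -- (E) equivariance :
    (hE : ∀ t g k, t ∈ TSet a b c → k ∈ Iwahori v → B (t * g * k) = Ω t * B g)
    -- (N) summing over any set of representatives of 𝔬/𝔭 :
    (hN : ∀ R : Finset F, (∀ r ∈ R, v r ≤ ev 0) →
      (∀ x : F, v x ≤ ev 0 → ∃! r, r ∈ R ∧ v (x - r) ≤ ev 1) →
      ∀ g, (∑ u ∈ R, B (g * !![1, 0; u, 1])) = - B (g * wmat F))
    -- (A) Atkin–Lehner eigenvector property :
    (hA : ∀ g, B (g * !![0, 1; ϖ, 0]) = -(χ ϖ) * B g) :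
    ∀ r : ℕ, C - 1 ≤ r →
      B (!![ϖ ^ (r + 1), 0; 0, 1] * wmat F) = (χ ϖ / (q : ℂ)) * B (!![ϖ ^ r, 0; 0, 1] * wmat F) :=
  stmt11_general v ϖ hϖ a b c hao hbo hc q hq χ Ω C hcond B hE hN hA
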